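/- arXiv:2404.08139 — 9 statements merged into one kernel-verified Lean document; each statement's English description precedes it below -/
import Mathlib

section
/- Let S be a commutative ring that is a ℚ-algebra. For every d ∈ ℕ and every natural number m, the evaluation of the d-th Faulhaber polynomial satisfies F_d(m) = ∑_{k=1}^{m} k^d in S. -/
open Polynomial

/-- The `d`-th Faulhaber polynomial over a commutative `ℚ`-algebra `S`:
`F_d := (1/(d+1)) ∑_{n=0}^{d} C(d+1,n) · B'_n · X^(d-n+1)`, where `B'_n` is the Bernoulli
number with the convention `B'_1 = +1/2`. -/
noncomputable def faulhaber (S : Type*) [CommRing S] [Algebra ℚ S] (d : ℕ) : Polynomial S :=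
  Polynomial.C (algebraMap ℚ S (1 / (d + 1))) *
    ∑ n ∈ Finset.range (d + 1),
      Polynomial.C (algebraMap ℚ S (((d + 1).choose n : ℚ) * bernoulli' n)) *
        Polynomial.X ^ (d - n + 1)

/-- Faulhaber's formula: `F_d(m) = ∑_{k=1}^{m} k^d` in any commutative `ℚ`-algebra. -/
theorem faulhaber_eval_nat (S : Type*) [CommRing S] [Algebra ℚ S] (d m : ℕ) :
    (faulhaber S d).eval (m : S) = ∑ k ∈ Finset.Icc 1 m, (k : S) ^ d := by
  have key := sum_Ico_pow m d
  have hL : (faulhaber S d).eval (m : S) =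
      algebraMap ℚ S (∑ i ∈ Finset.range (d + 1),
        bernoulli' i * (d + 1).choose i * (m : ℚ) ^ (d + 1 - i) / (d + 1)) := by
    rw [map_sum]
    simp only [faulhaber, eval_mul, eval_C, eval_finset_sum, eval_pow, eval_X,
      Finset.mul_sum]
    refine Finset.sum_congr rfl fun i hi => ?_
    have hie : d - i + 1 = d + 1 - i := by
      have := Finset.mem_range.mp hi; omega
    rw [hie]
    have : ((m : S)) ^ (d + 1 - i) = algebraMap ℚ S ((m : ℚ) ^ (d + 1 - i)) := by
      push_cast; ring
    rw [this, ← map_mul, ← map_mul]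
    congr 1
    ring
  have hR : (∑ k ∈ Finset.Icc 1 m, (k : S) ^ d) =
      algebraMap ℚ S (∑ k ∈ Finset.Ico 1 (m + 1), (k : ℚ) ^ d) := by
    rw [map_sum, ← Finset.Ico_add_one_right_eq_Icc]
    refine Finset.sum_congr rfl fun k _ => ?_
    push_cast; ring
  rw [hL, hR, key]
end

section
/- Let S be a commutative ring that is a ℚ-algebra and p ∈ S[X]. Then for all x, y ∈ S, Sum(p)(x+y) = Sum(p)(x) + Sum(p∘(X + x))(y), where p∘(X + x) denotes the polynomial obtained by substituting X + x for the variable of p (i.e. the composition of p with the polynomial X + C(x)). -/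
open Polynomial

/-- For `p = ∑_{i} p_i X^i`, the polynomial `Sum(p) := ∑_{i} p_i · F_i`. -/
noncomputable def polySum {S : Type*} [CommRing S] [Algebra ℚ S] (p : Polynomial S) :
    Polynomial S :=
  ∑ i ∈ Finset.range (p.natDegree + 1), Polynomial.C (p.coeff i) * faulhaber S i

/-- Two polynomials over a char-zero domain agreeing on all naturals are equal. -/
lemma eq_of_nat_eval {R : Type*} [CommRing R] [IsDomain R] [CharZero R] {p q : R[X]}
    (h : ∀ n : ℕ, p.eval (n : R) = q.eval (n : R)) : p = q := by
  have hz : p - q = 0 := by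
    apply Polynomial.eq_zero_of_infinite_isRoot
    apply Set.infinite_of_injective_forall_mem (f := fun n : ℕ => (n : R))
      (hi := Nat.cast_injective)
    intro n
    simp only [Set.mem_setOf_eq, IsRoot, eval_sub, h n, sub_self]
  linear_combination (norm := ring_nf) hz

lemma faulhaber_rat_eval (d m : ℕ) :
    (faulhaber ℚ d).eval (m : ℚ) = ∑ k ∈ Finset.Ico 1 (m + 1), (k : ℚ) ^ d := by
  rw [sum_Ico_pow]
  simp only [faulhaber, eval_mul, eval_C, eval_finset_sum, eval_pow, eval_X,
    Algebra.algebraMap_self, RingHom.id_apply]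
  rw [Finset.mul_sum]
  refine (Finset.sum_congr rfl fun i hi => ?_).symm
  rw [Finset.mem_range] at hi
  have h : d + 1 - i = d - i + 1 := by omega
  rw [h]
  ring

/-- The key rational identity at natural arguments. -/
lemma faulhaber_rat_nat_add (d n m : ℕ) :
    (faulhaber ℚ d).eval ((n : ℚ) + (m : ℚ)) =
      (faulhaber ℚ d).eval (n : ℚ) +
        ∑ i ∈ Finset.range (d + 1),
          (d.choose i : ℚ) * (n : ℚ) ^ (d - i) * (faulhaber ℚ i).eval (m : ℚ) := by
  have hc : ((n : ℚ) + (m : ℚ)) = ((n + m : ℕ) : ℚ) := by push_cast; ring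
  rw [hc, faulhaber_rat_eval, faulhaber_rat_eval]
  have hsplit : ∑ k ∈ Finset.Ico 1 (n + 1), (k : ℚ) ^ d
      + ∑ k ∈ Finset.Ico (n + 1) (n + m + 1), (k : ℚ) ^ d
      = ∑ k ∈ Finset.Ico 1 (n + m + 1), (k : ℚ) ^ d :=
    Finset.sum_Ico_consecutive _ (by omega) (by omega)
  rw [← hsplit]
  congr 1
  rw [Finset.sum_Ico_eq_sum_range]
  have hm : n + m + 1 - (n + 1) = m := by omega
  rw [hm]
  have hFi : ∀ i, (faulhaber ℚ i).eval (m : ℚ) = ∑ k ∈ Finset.range m, ((1 + k : ℕ) : ℚ) ^ i := by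
    intro i
    rw [faulhaber_rat_eval, Finset.sum_Ico_eq_sum_range]
    simp
  simp_rw [hFi, Finset.mul_sum]
  rw [Finset.sum_comm]
  refine Finset.sum_congr rfl fun k _ => ?_
  have : ((n + 1 + k : ℕ) : ℚ) = ((1 + k : ℕ) : ℚ) + (n : ℚ) := by push_cast; ring
  rw [this, add_pow]
  refine Finset.sum_congr rfl fun i hi => ?_
  ring

/-- Identity in `ℚ[X]`: composing a Faulhaber polynomial with `X + m`. -/
lemma faulhaber_comp_X_add_nat (d m : ℕ) :
    (faulhaber ℚ d).comp (X + C (m : ℚ)) =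
      faulhaber ℚ d + ∑ i ∈ Finset.range (d + 1),
        C ((d.choose i : ℚ)) * X ^ (d - i) * C ((faulhaber ℚ i).eval (m : ℚ)) := by
  apply eq_of_nat_eval
  intro n
  rw [eval_comp]
  simp only [eval_add, eval_comp, eval_X, eval_C, eval_finset_sum, eval_mul, eval_pow]
  exact faulhaber_rat_nat_add d n m

/-- The bivariate identity in `(ℚ[X])[X]` (inner variable plays the role of `x`,
outer variable the role of `y`). -/
lemma faulhaber_biv (d : ℕ) :
    ((faulhaber ℚ d).map (C : ℚ →+* ℚ[X])).comp (X + C X) =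
      C (faulhaber ℚ d) + ∑ i ∈ Finset.range (d + 1),
        C ((d.choose i : ℚ[X]) * X ^ (d - i)) * (faulhaber ℚ i).map (C : ℚ →+* ℚ[X]) := by
  apply eq_of_nat_eval
  intro m
  have hmC : ((m : ℕ) : ℚ[X]) = C ((m : ℕ) : ℚ) := by simp
  rw [eval_comp]
  simp only [eval_add, eval_X, eval_C, eval_finset_sum, eval_mul, eval_map]
  have hL : ∀ t : ℚ[X], eval₂ (C : ℚ →+* ℚ[X]) t (faulhaber ℚ d) = (faulhaber ℚ d).comp t :=
    fun t => rfl
  have hLi : ∀ i (t : ℚ[X]), eval₂ (C : ℚ →+* ℚ[X]) t (faulhaber ℚ i) = (faulhaber ℚ i).comp t :=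
    fun i t => rfl
  rw [hL]
  simp_rw [hLi]
  have h1 : ((m : ℚ[X]) + X) = X + C ((m : ℕ) : ℚ) := by rw [hmC]; ring
  rw [h1, faulhaber_comp_X_add_nat]
  congr 1
  refine Finset.sum_congr rfl fun i hi => ?_
  rw [hmC, comp_C, show ((d.choose i : ℚ[X])) = C ((d.choose i : ℚ)) by simp]

/-- Faulhaber polynomials commute with the algebra map. -/
lemma faulhaber_map {S : Type*} [CommRing S] [Algebra ℚ S] (d : ℕ) :
    (faulhaber ℚ d).map (algebraMap ℚ S) = faulhaber S d := by
  unfold faulhaber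
  simp only [Polynomial.map_mul, Polynomial.map_C, Polynomial.map_sum, Polynomial.map_pow,
    Polynomial.map_X, Algebra.algebraMap_self, RingHom.id_apply]

/-- Key identity: `F_d(x+y) = F_d(x) + ∑ C(d,i) x^{d-i} F_i(y)`. -/
lemma faulhaber_eval_add {S : Type*} [CommRing S] [Algebra ℚ S] (d : ℕ) (x y : S) :
    (faulhaber S d).eval (x + y) =
      (faulhaber S d).eval x + ∑ i ∈ Finset.range (d + 1),
        (d.choose i : S) * x ^ (d - i) * (faulhaber S i).eval y := by
  let f : ℚ[X] →+* S := (aeval x : ℚ[X] →ₐ[ℚ] S).toRingHom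
  have hfC : (f.comp (C : ℚ →+* ℚ[X])) = algebraMap ℚ S := by
    ext q
    simp [f]
  have h := congrArg (eval₂ f y) (faulhaber_biv d)
  rw [eval₂_comp] at h
  simp only [eval₂_add, eval₂_X, eval₂_C, eval₂_finset_sum, eval₂_mul, eval₂_map, hfC] at h
  have hx : f X = x := by simp [f]
  have hfd : f (faulhaber ℚ d) = (faulhaber S d).eval x := by
    simp only [f, AlgHom.toRingHom_eq_coe, RingHom.coe_coe]
    rw [aeval_def, ← eval_map, faulhaber_map]
  have hcoe : ∀ q : ℚ[X], ∀ t : S, eval₂ (algebraMap ℚ S) t q = (q.map (algebraMap ℚ S)).eval t :=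
    fun q t => (eval_map _ _).symm
  rw [hcoe, hx, hfd] at h
  simp_rw [hcoe] at h
  simp only [faulhaber_map] at h
  rw [add_comm y x] at h
  rw [h]
  congr 1
  refine Finset.sum_congr rfl fun i hi => ?_
  have : f ((d.choose i : ℚ[X]) * X ^ (d - i)) = (d.choose i : S) * x ^ (d - i) := by
    simp [f]
  rw [this]

lemma polySum_eq {S : Type*} [CommRing S] [Algebra ℚ S] {p : S[X]} {n : ℕ}
    (h : p.natDegree ≤ n) :
    polySum p = ∑ i ∈ Finset.range (n + 1), C (p.coeff i) * faulhaber S i := by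
  unfold polySum
  apply Finset.sum_subset
  · intro i hi
    simp only [Finset.mem_range] at hi ⊢
    omega
  · intro i _ hi
    simp only [Finset.mem_range, not_lt] at hi
    rw [coeff_eq_zero_of_natDegree_lt (by omega), map_zero, zero_mul]

/-- `Sum(p)(x+y) = Sum(p)(x) + Sum(p∘(X + x))(y)`. -/
theorem polySum_eval_add {S : Type*} [CommRing S] [Algebra ℚ S] (p : Polynomial S)
    (x y : S) :
    (polySum p).eval (x + y) =
      (polySum p).eval x + (polySum (p.comp (Polynomial.X + Polynomial.C x))).eval y := by
  set N := p.natDegree with hN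
  have hXC : (X + C x : S[X]).natDegree ≤ 1 := by
    refine le_trans (natDegree_add_le _ _) ?_
    simp [natDegree_X_le]
  have hq : (p.comp (X + C x)).natDegree ≤ N := by
    refine le_trans natDegree_comp_le ?_
    calc N * (X + C x).natDegree ≤ N * 1 := Nat.mul_le_mul_left N hXC
      _ = N := Nat.mul_one N
  have hcoeff : ∀ j, (p.comp (X + C x)).coeff j =
      ∑ i ∈ Finset.range (N + 1), p.coeff i * (x ^ (i - j) * (i.choose j : S)) := by
    intro j
    conv_lhs => rw [comp, eval₂_eq_sum_range]
    rw [finset_sum_coeff]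
    exact Finset.sum_congr rfl fun i _ => by rw [coeff_C_mul, coeff_X_add_C_pow]
  rw [polySum_eq hq, show polySum p = ∑ i ∈ Finset.range (N + 1), C (p.coeff i) * faulhaber S i
    from polySum_eq le_rfl]
  simp only [eval_finset_sum, eval_mul, eval_C]
  have hswap : ∑ j ∈ Finset.range (N + 1), (p.comp (X + C x)).coeff j * (faulhaber S j).eval y =
      ∑ i ∈ Finset.range (N + 1), p.coeff i *
        ∑ j ∈ Finset.range (i + 1), (i.choose j : S) * x ^ (i - j) * (faulhaber S j).eval y := by
    simp_rw [hcoeff, Finset.sum_mul]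
    rw [Finset.sum_comm]
    refine Finset.sum_congr rfl fun i hi => ?_
    have hij : i + 1 ≤ N + 1 := by simp only [Finset.mem_range] at hi; omega
    rw [Finset.mul_sum, ← Finset.sum_subset (Finset.range_subset_range.mpr hij)
        (fun j _ hj => by
          simp only [Finset.mem_range, not_lt] at hj
          rw [Nat.choose_eq_zero_of_lt (by omega)]
          simp)]
    exact Finset.sum_congr rfl fun j _ => by ring
  rw [hswap, ← Finset.sum_add_distrib]
  refine Finset.sum_congr rfl fun i hi => ?_
  rw [faulhaber_eval_add, mul_add]
end

section
/- Let q be a prime number and f : ℤ_q → ℤ_q a continuous function on the q-adic integers. Define g : ℕ → ℤ_q by g(n) := ∑_{i=1}^{n} f(i) (with i interpreted in ℤ_q via the canonical map). Then g is continuous with respect to the q-adic topology on ℕ: for every N ∈ ℕ there exists M ∈ ℕ such that for all x, y ∈ ℕ, if q^M divides (x − y) in ℤ_q then q^N divides (g(x) − g(y)) in ℤ_q. -/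
open Finset IsUltrametricDist

/-- If `f : ℤ_q → ℤ_q` is continuous, then the partial sum function
`g(n) = ∑_{i=1}^{n} f(i)` is continuous with respect to the `q`-adic topology on `ℕ`:
for every `N` there is an `M` such that `q^M ∣ x - y` implies `q^N ∣ g x - g y`. -/
theorem padic_partial_sums_continuous (q : ℕ) [Fact q.Prime]
    (f : ℤ_[q] → ℤ_[q]) (hf : Continuous f)
    (g : ℕ → ℤ_[q]) (hg : ∀ n : ℕ, g n = ∑ i ∈ Finset.Icc 1 n, f (i : ℤ_[q])) :
    ∀ N : ℕ, ∃ M : ℕ, ∀ x y : ℕ,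
      (q : ℤ_[q]) ^ M ∣ ((x : ℤ_[q]) - (y : ℤ_[q])) →
      (q : ℤ_[q]) ^ N ∣ (g x - g y) := by
  intro N
  have hq0 : (0:ℝ) < q := by exact_mod_cast (Fact.out : q.Prime).pos
  have hdvd : ∀ (z : ℤ_[q]) (n : ℕ), (q:ℤ_[q])^n ∣ z ↔ ‖z‖ ≤ (q:ℝ)^(-n:ℤ) := by
    intro z n
    rw [PadicInt.norm_le_pow_iff_mem_span_pow, Ideal.mem_span_singleton]
  have hNpos : (0:ℝ) < (q:ℝ)^(-N:ℤ) := zpow_pos hq0 _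
  obtain ⟨δ, hδ0, hδ⟩ := Metric.uniformContinuous_iff.mp
    (CompactSpace.uniformContinuous_of_continuous hf) ((q:ℝ)^(-N:ℤ)) hNpos
  obtain ⟨K, hK⟩ := PadicInt.exists_pow_neg_lt q hδ0
  have hUC : ∀ a b : ℤ_[q], ‖a - b‖ ≤ (q:ℝ)^(-K:ℤ) → ‖f a - f b‖ ≤ (q:ℝ)^(-N:ℤ) := by
    intro a b h
    have hd : dist a b < δ := lt_of_le_of_lt (by rwa [dist_eq_norm]) hK
    have := hδ hd
    rw [dist_eq_norm] at this
    exact this.le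
  -- key estimate: sums over blocks of length `c * q^K`
  have key : ∀ a c : ℕ,
      ‖(∑ i ∈ Finset.range (c * q ^ K), f ((a + i : ℕ) : ℤ_[q])) -
        c • ∑ j ∈ Finset.range (q ^ K), f ((a + j : ℕ) : ℤ_[q])‖ ≤ (q:ℝ)^(-N:ℤ) := by
    intro a c
    induction c with
    | zero => simp only [Nat.zero_eq, zero_mul, Finset.range_zero, Finset.sum_empty, zero_smul,
      sub_zero, norm_zero]; exact hNpos.le
    | succ c ih =>
      rw [Nat.succ_mul, Finset.sum_range_add, succ_nsmul]
      have h1 : ‖(∑ j ∈ Finset.range (q ^ K), f ((a + (c * q ^ K + j) : ℕ) : ℤ_[q])) -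
          ∑ j ∈ Finset.range (q ^ K), f ((a + j : ℕ) : ℤ_[q])‖ ≤ (q:ℝ)^(-N:ℤ) := by
        rw [← Finset.sum_sub_distrib]
        refine norm_sum_le_of_forall_le_of_nonneg hNpos.le fun j _ => ?_
        apply hUC
        have he : ((a + (c * q ^ K + j) : ℕ) : ℤ_[q]) - ((a + j : ℕ) : ℤ_[q])
            = ((c * q ^ K : ℕ) : ℤ_[q]) := by push_cast; ring
        rw [he, ← hdvd]
        exact ⟨(c : ℤ_[q]), by push_cast; ring⟩
      have hsplit : (∑ i ∈ Finset.range (c * q ^ K), f ((a + i : ℕ) : ℤ_[q])) +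
            (∑ j ∈ Finset.range (q ^ K), f ((a + (c * q ^ K + j) : ℕ) : ℤ_[q])) -
            ((c • ∑ j ∈ Finset.range (q ^ K), f ((a + j : ℕ) : ℤ_[q])) +
              ∑ j ∈ Finset.range (q ^ K), f ((a + j : ℕ) : ℤ_[q]))
          = ((∑ i ∈ Finset.range (c * q ^ K), f ((a + i : ℕ) : ℤ_[q])) -
              c • ∑ j ∈ Finset.range (q ^ K), f ((a + j : ℕ) : ℤ_[q])) +
            ((∑ j ∈ Finset.range (q ^ K), f ((a + (c * q ^ K + j) : ℕ) : ℤ_[q])) -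
              ∑ j ∈ Finset.range (q ^ K), f ((a + j : ℕ) : ℤ_[q])) := by ring
      rw [hsplit]
      exact (norm_add_le_max _ _).trans (max_le ih h1)
  refine ⟨N + K, ?_⟩
  suffices H : ∀ x y : ℕ, y ≤ x → (q : ℤ_[q]) ^ (N + K) ∣ ((x : ℤ_[q]) - (y : ℤ_[q])) →
      (q : ℤ_[q]) ^ N ∣ (g x - g y) by
    intro x y hxy
    rcases le_total y x with h | h
    · exact H x y h hxy
    · rw [← dvd_neg, neg_sub]
      exact H y x h (by rwa [← dvd_neg, neg_sub] at hxy)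
  intro x y hyx hxy
  -- extract a natural-number factorization of x - y
  have hcast : ((x : ℤ_[q]) - (y : ℤ_[q])) = (((x - y : ℕ) : ℤ) : ℤ_[q]) := by
    push_cast [Nat.cast_sub hyx]; ring
  rw [hcast, PadicInt.pow_p_dvd_int_iff] at hxy
  have hnat : q ^ (N + K) ∣ (x - y) := by exact_mod_cast hxy
  obtain ⟨c, hc⟩ := hnat
  -- rewrite g x - g y as a sum over a block
  have hgsub : g x - g y = ∑ i ∈ Finset.range (x - y), f (((y + 1) + i : ℕ) : ℤ_[q]) := by
    rw [hg, hg]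
    have h1 : ∀ n : ℕ, Finset.Icc 1 n = Finset.Ico 1 (n + 1) := fun n =>
      (Finset.Ico_add_one_right_eq_Icc 1 n).symm
    rw [h1, h1, ← Finset.sum_Ico_consecutive (fun i => f (i : ℤ_[q]))
      (Nat.le_add_left 1 y) (by omega : y + 1 ≤ x + 1)]
    rw [add_sub_cancel_left, Finset.sum_Ico_eq_sum_range, Nat.succ_sub_succ]
  have hc' : x - y = (c * q ^ N) * q ^ K := by rw [hc]; ring
  rw [hgsub, hc']
  rw [hdvd]
  have h2 := key (y + 1) (c * q ^ N)
  have h3 : ‖(c * q ^ N) • ∑ j ∈ Finset.range (q ^ K), f (((y + 1) + j : ℕ) : ℤ_[q])‖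
      ≤ (q:ℝ)^(-N:ℤ) := by
    rw [← hdvd, nsmul_eq_mul]
    exact Dvd.dvd.mul_right ⟨(c : ℤ_[q]), by push_cast; ring⟩ _
  calc ‖∑ i ∈ Finset.range ((c * q ^ N) * q ^ K), f (((y + 1) + i : ℕ) : ℤ_[q])‖
      = ‖((∑ i ∈ Finset.range ((c * q ^ N) * q ^ K), f (((y + 1) + i : ℕ) : ℤ_[q])) -
          (c * q ^ N) • ∑ j ∈ Finset.range (q ^ K), f (((y + 1) + j : ℕ) : ℤ_[q])) +
          (c * q ^ N) • ∑ j ∈ Finset.range (q ^ K), f (((y + 1) + j : ℕ) : ℤ_[q])‖ := by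
        rw [sub_add_cancel]
    _ ≤ _ := (norm_add_le_max _ _).trans (max_le h2 h3)
end

section
/- Let q be a prime number and f : ℤ_q → ℤ_q a continuous function. Then there exists a unique continuous function g̃ : ℤ_q → ℤ_q such that for every natural number n, g̃(n) = ∑_{i=1}^{n} f(i) (where n and i are interpreted in ℤ_q via the canonical map ℕ → ℤ_q). -/
/-!
The partial sums `T n = ∑_{i=1}^{n} f(i)` have forward differences `Δ T n = f(n + 1)`, so the
iterated differences `Δ^(k+1) T 0 = Δ^k (f(· + 1)) 0` tend to `0` by Mahler's theorem applied to
the continuous function `x ↦ f(x + 1)`. Hence the Mahler series with coefficients `Δ^k T 0`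
converges to a continuous function on `ℤ_q`, which agrees with `T` on `ℕ` by Newton's forward
difference formula. Uniqueness holds because `ℕ` is dense in `ℤ_q`.
-/

open Finset Filter
open scoped fwdDiff Topology

section ForwardDifference

variable {R G : Type*} [AddCommMonoidWithOne R] [AddCommGroup G]

lemma fwdDiff_iter_comp_natCast (F : R → G) (k n : ℕ) :
    (Δ_[1])^[k] (F ∘ Nat.cast) n = (Δ_[1])^[k] F (n : R) := by
  induction k generalizing F with
  | zero => rfl
  | succ k ih =>
    have hstep : Δ_[1] (F ∘ Nat.cast) = Δ_[1] F ∘ Nat.cast := by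
      funext m
      simp [fwdDiff]
    rw [Function.iterate_succ_apply, Function.iterate_succ_apply, hstep, ih]

lemma fwdDiff_sum_Icc_one (f : ℕ → G) :
    Δ_[1] (fun n ↦ ∑ i ∈ Icc 1 n, f i) = fun n ↦ f (n + 1) := by
  funext n
  rw [fwdDiff, sum_Icc_succ_top (by omega), add_sub_cancel_left]

end ForwardDifference

namespace PadicInt

variable {p : ℕ} [Fact p.Prime] {E : Type*} [NormedAddCommGroup E] [Module ℤ_[p] E]
  [IsBoundedSMul ℤ_[p] E] [IsUltrametricDist E]

lemma tendsto_fwdDiff_iter_sum_Icc_one {f : ℤ_[p] → E} (hf : Continuous f) :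
    Tendsto (fun k ↦ (Δ_[1])^[k] (fun n : ℕ ↦ ∑ i ∈ Icc 1 n, f i) 0) atTop (𝓝 0) := by
  rw [← tendsto_add_atTop_iff_nat 1]
  refine (fwdDiff_tendsto_zero ⟨fun x ↦ f (x + 1), by fun_prop⟩).congr fun k ↦ ?_
  rw [Function.iterate_succ_apply, fwdDiff_sum_Icc_one]
  simpa [Function.comp_def] using (fwdDiff_iter_comp_natCast (fun x ↦ f (x + 1)) k 0).symm

variable [CompleteSpace E]

lemma mahlerSeries_fwdDiff_apply_natCast {T : ℕ → E}
    (hT : Tendsto (fun k ↦ (Δ_[1])^[k] T 0) atTop (𝓝 0)) (n : ℕ) :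
    mahlerSeries (fun k ↦ (Δ_[1])^[k] T 0) (n : ℤ_[p]) = T n := by
  rw [mahlerSeries_apply_nat hT le_rfl]
  simpa using (shift_eq_sum_fwdDiff_iter 1 T n 0).symm

lemma exists_continuous_apply_natCast_eq {T : ℕ → E}
    (hT : Tendsto (fun k ↦ (Δ_[1])^[k] T 0) atTop (𝓝 0)) :
    ∃ g : ℤ_[p] → E, Continuous g ∧ ∀ n : ℕ, g n = T n :=
  ⟨mahlerSeries (fun k ↦ (Δ_[1])^[k] T 0), map_continuous _,
    mahlerSeries_fwdDiff_apply_natCast hT⟩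

end PadicInt

/-- For a continuous `f : ℤ_q → ℤ_q` there is a unique continuous function
`g̃ : ℤ_q → ℤ_q` extending the partial sums `n ↦ ∑_{i=1}^{n} f(i)`. -/
theorem padic_dependent_sum_exists_unique (q : ℕ) [Fact q.Prime]
    (f : ℤ_[q] → ℤ_[q]) (hf : Continuous f) :
    ∃! g : ℤ_[q] → ℤ_[q], Continuous g ∧
      ∀ n : ℕ, g (n : ℤ_[q]) = ∑ i ∈ Finset.Icc 1 n, f (i : ℤ_[q]) := by
  obtain ⟨g, hg, hg_nat⟩ := PadicInt.exists_continuous_apply_natCast_eq (p := q)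
    (PadicInt.tendsto_fwdDiff_iter_sum_Icc_one hf)
  refine ⟨g, ⟨hg, hg_nat⟩, fun g' ⟨hg', hg'_nat⟩ ↦ ?_⟩
  exact PadicInt.denseRange_natCast.equalizer hg' hg
    (funext fun n ↦ (hg'_nat n).trans (hg_nat n).symm)
end

section
/- Let q be a prime number, U a metrizable topological space, x : U → ℤ_q a continuous function, and f : U × ℤ_q → ℤ_q a continuous function. Suppose h : U × ℤ_q → ℤ_q is a function such that for every u ∈ U the map h(u,−) : ℤ_q → ℤ_q is continuous and satisfies h(u,n) = ∑_{i=1}^{n} f(u,i) for every natural number n. Then the function U → ℤ_q, u ↦ h(u, x(u)), is continuous. -/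
/-- Continuity of the `q`-adic dependent sum: if `x : U → ℤ_q` and `f : U × ℤ_q → ℤ_q` are
continuous, `U` is metrizable, and `h(u,−)` is, for each `u`, the continuous extension of the
partial sums `n ↦ ∑_{i=1}^{n} f(u,i)`, then `u ↦ h(u, x(u))` is continuous. -/
theorem padic_dependent_sum_continuous (q : ℕ) [Fact q.Prime]
    (U : Type*) [TopologicalSpace U] [TopologicalSpace.MetrizableSpace U]
    (x : U → ℤ_[q]) (hx : Continuous x)
    (f : U × ℤ_[q] → ℤ_[q]) (hf : Continuous f)
    (h : U × ℤ_[q] → ℤ_[q])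
    (hcont : ∀ u : U, Continuous fun t : ℤ_[q] => h (u, t))
    (hsum : ∀ (u : U) (n : ℕ),
      h (u, (n : ℤ_[q])) = ∑ i ∈ Finset.Icc 1 n, f (u, (i : ℤ_[q]))) :
    Continuous fun u : U => h (u, x u) := by
  classical
  let Fc : C(U, C(ℤ_[q], ℤ_[q])) := ContinuousMap.curry ⟨f, hf⟩
  let H : U → C(ℤ_[q], ℤ_[q]) := fun u => ⟨fun t => h (u, t), hcont u⟩
  have key : ∀ u u' : U, dist (H u) (H u') ≤ dist (Fc u) (Fc u') := by
    intro u u'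
    rw [ContinuousMap.dist_le dist_nonneg]
    intro t
    have hnat : ∀ n : ℕ,
        dist (h (u, (n : ℤ_[q]))) (h (u', (n : ℤ_[q]))) ≤ dist (Fc u) (Fc u') := by
      intro n
      rw [hsum, hsum, dist_eq_norm, ← Finset.sum_sub_distrib]
      refine IsUltrametricDist.norm_sum_le_of_forall_le_of_nonneg dist_nonneg fun i _ => ?_
      rw [← dist_eq_norm]
      exact ContinuousMap.dist_apply_le_dist (f := Fc u) (g := Fc u') _
    have hcl : IsClosed {t : ℤ_[q] |
        dist (h (u, t)) (h (u', t)) ≤ dist (Fc u) (Fc u')} :=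
      isClosed_le (Continuous.dist (hcont u) (hcont u')) continuous_const
    have hrange : Set.range (Nat.cast : ℕ → ℤ_[q]) ⊆
        {t : ℤ_[q] | dist (h (u, t)) (h (u', t)) ≤ dist (Fc u) (Fc u')} := by
      rintro _ ⟨n, rfl⟩
      exact hnat n
    have := closure_minimal hrange hcl
    exact this (by rw [PadicInt.denseRange_natCast.closure_range]; trivial)
  have hH : Continuous H := by
    rw [continuous_iff_continuousAt]
    intro u₀
    rw [ContinuousAt, Metric.tendsto_nhds]
    intro ε hε
    have hF : ∀ᶠ u in nhds u₀, dist (Fc u) (Fc u₀) < ε := by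
      have := (Fc.continuous.tendsto u₀)
      rw [Metric.tendsto_nhds] at this
      exact this ε hε
    filter_upwards [hF] with u hu
    exact lt_of_le_of_lt (key u u₀) hu
  have heval : Continuous fun p : C(ℤ_[q], ℤ_[q]) × ℤ_[q] => p.1 p.2 :=
    ContinuousEval.continuous_eval
  exact heval.comp (hH.prodMk hx)
end

section
/- Let X and Y be real Banach spaces (complete normed real vector spaces) and let T : X → Y be a continuous function such that for every x ∈ ℝ and every continuous function f : ℝ → X one has T( ∫_0^x f(t) dt ) = ∫_0^x T(f(t)) dt (interval Bochner integrals). Then T is additive: T(a + b) = T(a) + T(b) for all a, b ∈ X. -/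
/-!
Integrating a constant shows `T (x • c) = x • T c`. For additivity, integrate over `[0, 2]` a
continuous path that is a multiple of `a` on `[0, 1]` and a multiple of `b` on `[1, 2]`, with
weights of integral `1`: its integral is `a + b`, and by homogeneity `T` maps it pointwise to the
analogous path for `T a` and `T b`, whose integral is `T a + T b`.
-/

open intervalIntegral

section Splice

variable {Z : Type*} [NormedAddCommGroup Z] [NormedSpace ℝ Z]

/-- Both weights vanish at `t = 1`; they have integral `1` over `[0, 1]`, resp. `[1, 2]`. -/
noncomputable def splice (u v : Z) (t : ℝ) : Z :=
  if t ≤ 1 then (2 * (1 - t)) • u else (2 * (t - 1)) • v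

theorem continuous_splice (u v : Z) : Continuous (splice u v) :=
  Continuous.if_le (by fun_prop) (by fun_prop) continuous_id continuous_const
    fun t (ht : t = 1) => by simp [ht]

theorem integral_splice [CompleteSpace Z] (u v : Z) : ∫ t in (0 : ℝ)..2, splice u v t = u + v := by
  have hii := (continuous_splice u v).intervalIntegrable (μ := MeasureTheory.volume)
  have h_left : ∫ t in (0 : ℝ)..1, splice u v t = u := by
    rw [integral_congr (g := fun t => (2 * (1 - t)) • u), intervalIntegral.integral_smul_const]
    · norm_num [integral_comp_sub_left fun x => x]
    · intro t ht
      rw [Set.uIcc_of_le zero_le_one] at ht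
      simp [splice, ht.2]
  have h_right : ∫ t in (1 : ℝ)..2, splice u v t = v := by
    rw [integral_congr (g := fun t => (2 * (t - 1)) • v), intervalIntegral.integral_smul_const]
    · norm_num [integral_comp_sub_right fun x => x]
    · intro t ht
      rw [Set.uIcc_of_le one_le_two] at ht
      rcases ht.1.eq_or_lt with rfl | hlt
      · simp [splice]
      · simp [splice, hlt.not_ge]
  rw [← integral_add_adjacent_intervals (hii 0 1) (hii 1 2), h_left, h_right]

theorem map_splice {W : Type*} [NormedAddCommGroup W] [NormedSpace ℝ W] {T : Z → W}
    (hT : ∀ (x : ℝ) (c : Z), T (x • c) = x • T c) (u v : Z) (t : ℝ) :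
    T (splice u v t) = splice (T u) (T v) t := by
  by_cases ht : t ≤ 1 <;> simp [splice, ht, hT]

end Splice

theorem map_smul_of_commutes_with_integrals {X Y : Type*}
    [NormedAddCommGroup X] [NormedSpace ℝ X] [CompleteSpace X]
    [NormedAddCommGroup Y] [NormedSpace ℝ Y] [CompleteSpace Y] {T : X → Y}
    (hint : ∀ (x : ℝ) (f : ℝ → X), Continuous f →
      T (∫ t in (0 : ℝ)..x, f t) = ∫ t in (0 : ℝ)..x, T (f t))
    (x : ℝ) (c : X) : T (x • c) = x • T c := by
  simpa using hint x (fun _ => c) continuous_const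

theorem additive_of_commutes_with_integrals_general
    (X : Type*) [NormedAddCommGroup X] [NormedSpace ℝ X] [CompleteSpace X]
    (Y : Type*) [NormedAddCommGroup Y] [NormedSpace ℝ Y] [CompleteSpace Y]
    (T : X → Y)
    (hint : ∀ (x : ℝ) (f : ℝ → X), Continuous f →
      T (∫ t in (0 : ℝ)..x, f t) = ∫ t in (0 : ℝ)..x, T (f t)) :
    ∀ a b : X, T (a + b) = T a + T b := by
  intro a b
  have h := hint 2 (splice a b) (continuous_splice a b)
  simp_rw [map_splice (map_smul_of_commutes_with_integrals hint), integral_splice] at h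
  exact h

/-- A continuous map between real Banach spaces that commutes with all interval Bochner
integrals of continuous functions is additive. -/
theorem additive_of_commutes_with_integrals
    (X : Type*) [NormedAddCommGroup X] [NormedSpace ℝ X] [CompleteSpace X]
    (Y : Type*) [NormedAddCommGroup Y] [NormedSpace ℝ Y] [CompleteSpace Y]
    (T : X → Y) (hT : Continuous T)
    (hint : ∀ (x : ℝ) (f : ℝ → X), Continuous f →
      T (∫ t in (0 : ℝ)..x, f t) = ∫ t in (0 : ℝ)..x, T (f t)) :
    ∀ a b : X, T (a + b) = T a + T b :=
  additive_of_commutes_with_integrals_general X Y T hint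
end

section
/- Let M be a type equipped with, for every n ∈ ℕ, a function S_n : (Fin n → M) → M, satisfying: (i) (Unit) S_1(f) = f(0) for every f : Fin 1 → M; and (ii) (Sum Associativity) for every n ∈ ℕ, every f : Fin n → ℕ, and every g : Fin(∑_{i} f(i)) → M, one has S_{∑_i f(i)}(g) = S_n( i ↦ S_{f(i)}( j ↦ g( (∑_{k<i} f(k)) + j ) ) ), where (∑_{k<i} f(k)) + j is interpreted as an element of Fin(∑_i f(i)). Then M is a monoid with unit e := S_0 of the empty family and multiplication a·b := S_2 of the family (a,b); that is, this multiplication is associative and e is a two-sided unit for it. -/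
/-- The flattening map `(i, j) ↦ (∑_{k<i} f k) + j` lands below the total sum `∑_i f i`. -/
theorem fin_flatten_lt {n : ℕ} (f : Fin n → ℕ) (i : Fin n) (j : Fin (f i)) :
    (∑ k ∈ Finset.Iio i, f k) + (j : ℕ) < ∑ k, f k := by
  have h1 : ∑ k ∈ Finset.Iic i, f k ≤ ∑ k, f k :=
    Finset.sum_le_sum_of_subset (Finset.subset_univ _)
  have h2 : ∑ k ∈ Finset.Iic i, f k = f i + ∑ k ∈ Finset.Iio i, f k := by
    rw [Finset.Iic_eq_cons_Iio, Finset.sum_cons]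
  have h3 : (j : ℕ) < f i := j.isLt
  omega

/-- A dependent right `ℕ`-module is a monoid: a type `M` equipped with dependent sum
operations `S_n : (Fin n → M) → M` satisfying the unit law and the sum associativity law
along the flattening map is a monoid under `a · b := S_2 (a, b)` with unit `S_0` of the
empty family. -/
theorem monoid_of_dependent_sums (M : Type*) (S : ∀ n : ℕ, (Fin n → M) → M)
    (unit : ∀ f : Fin 1 → M, S 1 f = f 0)
    (assoc : ∀ (n : ℕ) (f : Fin n → ℕ) (g : Fin (∑ i, f i) → M),
      S (∑ i, f i) g = S n fun i => S (f i) fun j =>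
        g ⟨(∑ k ∈ Finset.Iio i, f k) + (j : ℕ), fin_flatten_lt f i j⟩) :
    let e : M := S 0 (fun x => x.elim0)
    let mul : M → M → M := fun a b => S 2 ![a, b]
    (∀ a b c : M, mul (mul a b) c = mul a (mul b c)) ∧
      (∀ a : M, mul e a = a) ∧ (∀ a : M, mul a e = a) := by
  intro e mul
  have hS : ∀ (m n : ℕ) (h : m = n) (g : Fin n → M),
      S m (fun k => g (Fin.cast h k)) = S n g := by
    rintro m n rfl g; rfl
  have unit' : ∀ (m : ℕ) (h : m = 1) (f : Fin m → M), S m f = f (Fin.cast h.symm 0) := by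
    rintro m rfl f; exact unit f
  have S0 : ∀ g : Fin 0 → M, S 0 g = e := by
    intro g; congr 1; funext x; exact x.elim0
  refine ⟨?_, ?_, ?_⟩
  · intro a b c
    have h21 : (∑ i, ![2,1] i) = 3 := by simp
    have h12 : (∑ i, ![1,2] i) = 3 := by simp
    have L := assoc 2 ![2,1] (fun k => ![a,b,c] (Fin.cast h21 k))
    have R := assoc 2 ![1,2] (fun k => ![a,b,c] (Fin.cast h12 k))
    rw [hS _ _ h21] at L
    rw [hS _ _ h12] at R
    have eL : mul (mul a b) c = S 3 ![a,b,c] := by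
      rw [L]
      show S 2 ![S 2 ![a,b], c] = _
      congr 1
      funext i
      fin_cases i
      · show S 2 ![a,b] = S (![2,1] 0) _
        congr 1
        funext j
        fin_cases j <;> rfl
      · exact (unit fun j => ![a,b,c] (Fin.cast h21
          ⟨(∑ k ∈ Finset.Iio (1:Fin 2), ![2,1] k) + (j:ℕ), fin_flatten_lt ![2,1] 1 j⟩)).symm
    have eR : mul a (mul b c) = S 3 ![a,b,c] := by
      rw [R]
      show S 2 ![a, S 2 ![b,c]] = _
      congr 1
      funext i
      fin_cases i
      · exact (unit fun j => ![a,b,c] (Fin.cast h12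
          ⟨(∑ k ∈ Finset.Iio (0:Fin 2), ![1,2] k) + (j:ℕ), fin_flatten_lt ![1,2] 0 j⟩)).symm
      · show S 2 ![b,c] = S (![1,2] 1) _
        congr 1
        funext j
        fin_cases j <;> rfl
    rw [eL, eR]
  · intro a
    have h01 : (∑ i, ![0,1] i) = 1 := by simp
    have H := assoc 2 ![0,1] (fun k => ![a] (Fin.cast h01 k))
    rw [hS _ _ h01, unit] at H
    show S 2 ![e, a] = a
    refine Eq.trans ?_ (H.symm.trans rfl)
    congr 1
    funext i
    fin_cases i
    · show e = S (![0,1] 0) _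
      exact (S0 _).symm
    · exact (unit fun j => ![a] (Fin.cast h01
          ⟨(∑ k ∈ Finset.Iio (1:Fin 2), ![0,1] k) + (j:ℕ), fin_flatten_lt ![0,1] 1 j⟩)).symm
  · intro a
    have h10 : (∑ i, ![1,0] i) = 1 := by simp
    have H := assoc 2 ![1,0] (fun k => ![a] (Fin.cast h10 k))
    rw [hS _ _ h10, unit] at H
    show S 2 ![a, e] = a
    refine Eq.trans ?_ (H.symm.trans rfl)
    congr 1
    funext i
    fin_cases i
    · exact (unit fun j => ![a] (Fin.cast h10
          ⟨(∑ k ∈ Finset.Iio (0:Fin 2), ![1,0] k) + (j:ℕ), fin_flatten_lt ![1,0] 0 j⟩)).symm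
    · show e = S (![1,0] 1) _
      exact (S0 _).symm
end

section
/- Let A be a dependent adder in a category 𝒞 with finite limits. For every x : U → A, f : ⟦x⟧ → A, g : ⟦Σ^x f⟧ → A and h : ⟦Σ^x (f⊠g)⟧ → A, one has f ⊠ (g ⊠ h) = (f ⊠ g) ⊠ h, where f ⊠ g := Σ^f (g ∘ f♭). -/
open CategoryTheory CategoryTheory.Limits

universe v u

/-- A dependent adder in a category `𝒞` with finite limits: an object `A`, a family
`p : F ⟶ A` (with `⟦x⟧ := pullback x p` for `x : U ⟶ A`), a unit `1_F : ⊤_ 𝒞 ⟶ F`,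
natural dependent sum functions `Σ^x : (⟦x⟧ ⟶ A) → (U ⟶ A)` and flattening maps
`f♭ : ⟦f⟧ ⟶ ⟦Σ^x f⟧` over `U`, satisfying the right unit, left unit, sum associativity
and flatten associativity axioms. -/
structure DependentAdder (𝒞 : Type u) [Category.{v} 𝒞] [HasFiniteLimits 𝒞] where
  /-- The underlying object. -/
  A : 𝒞
  /-- The total object of the family of index objects. -/
  F : 𝒞
  /-- The structural family map. -/
  p : F ⟶ A
  /-- The unit `1_F : * ⟶ F`; `1_A := 1_F ≫ p`. -/
  unit : ⊤_ 𝒞 ⟶ F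
  /-- The dependent sum functions. -/
  sum : ∀ {U : 𝒞} (x : U ⟶ A), (pullback x p ⟶ A) → (U ⟶ A)
  /-- Naturality of the dependent sums in `x ∈ 𝒞/A`. -/
  sum_natural : ∀ {U U' : 𝒞} (h : U ⟶ U') (y : U' ⟶ A) (g : pullback y p ⟶ A),
    h ≫ sum y g =
      sum (h ≫ y) (pullback.map (h ≫ y) p y p h (𝟙 F) (𝟙 A) (by simp) (by simp) ≫ g)
  /-- The flattening maps `f♭ : ⟦f⟧ ⟶ ⟦Σ^x f⟧`. -/
  flat : ∀ {U : 𝒞} (x : U ⟶ A) (f : pullback x p ⟶ A),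
    pullback f p ⟶ pullback (sum x f) p
  /-- The flattening maps are morphisms over `U`. -/
  flat_over : ∀ {U : 𝒞} (x : U ⟶ A) (f : pullback x p ⟶ A),
    flat x f ≫ pullback.fst (sum x f) p = pullback.fst f p ≫ pullback.fst x p
  /-- Right Unit Axiom: `Σ^x const_{1_A} = x`. -/
  right_unit : ∀ {U : 𝒞} (x : U ⟶ A),
    sum x (terminal.from (pullback x p) ≫ unit ≫ p) = x
  /-- Left Unit Axiom: `Σ^{const_{1_A}} (f ∘ (const_{1_A})♭) = f`. -/
  left_unit : ∀ {U : 𝒞} (x : U ⟶ A) (f : pullback x p ⟶ A),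
    sum (terminal.from (pullback x p) ≫ unit ≫ p)
      (flat x (terminal.from (pullback x p) ≫ unit ≫ p) ≫
        eqToHom (by rw [right_unit]) ≫ f) = f
  /-- Sum Associativity Axiom: `Σ^{Σ^x f} g = Σ^x (Σ^f (g ∘ f♭))`. -/
  sum_assoc : ∀ {U : 𝒞} (x : U ⟶ A) (f : pullback x p ⟶ A)
    (g : pullback (sum x f) p ⟶ A),
    sum (sum x f) g = sum x (sum f (flat x f ≫ g))
  /-- Flatten Associativity Axiom:
  `(g ∘ f♭)♭ ≫ (f⊠g)♭ = (f♭ ×_A id_F) ≫ g♭` (up to the canonical identification). -/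
  flat_assoc : ∀ {U : 𝒞} (x : U ⟶ A) (f : pullback x p ⟶ A)
    (g : pullback (sum x f) p ⟶ A),
    flat f (flat x f ≫ g) ≫ flat x (sum f (flat x f ≫ g)) =
      pullback.map (flat x f ≫ g) p g p (flat x f) (𝟙 F) (𝟙 A) (by simp) (by simp) ≫
        flat (sum x f) g ≫ eqToHom (by rw [sum_assoc])

variable {𝒞 : Type u} [Category.{v} 𝒞] [HasFiniteLimits 𝒞]

/-- The composition `f ⊠ g := Σ^f (g ∘ f♭)`. -/
noncomputable def DependentAdder.box (D : DependentAdder 𝒞) {U : 𝒞} (x : U ⟶ D.A)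
    (f : pullback x D.p ⟶ D.A) (g : pullback (D.sum x f) D.p ⟶ D.A) :
    pullback x D.p ⟶ D.A :=
  D.sum f (D.flat x f ≫ g)

/-! Both sides are double sums `Σ^f Σ^{g ∘ f♭}`: the left one by naturality of `Σ` along `f♭`,
the right one by sum associativity. Their integrands then agree by flatten associativity. -/

namespace DependentAdder

variable (D : DependentAdder 𝒞) {U : 𝒞} (x : U ⟶ D.A) (f : pullback x D.p ⟶ D.A)
  (g : pullback (D.sum x f) D.p ⟶ D.A)

lemma box_box_eq_sum_sum_map (k : pullback (D.sum (D.sum x f) g) D.p ⟶ D.A) :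
    D.box x f (D.box (D.sum x f) g k) =
      D.sum f (D.sum (D.flat x f ≫ g)
        (pullback.map (D.flat x f ≫ g) D.p g D.p (D.flat x f) (𝟙 D.F) (𝟙 D.A)
          (by simp) (by simp) ≫ D.flat (D.sum x f) g ≫ k)) := by
  rw [box, box, D.sum_natural]

lemma box_box_eq_sum_sum_flat_flat (k : pullback (D.sum x (D.box x f g)) D.p ⟶ D.A) :
    D.box x (D.box x f g) k =
      D.sum f (D.sum (D.flat x f ≫ g) (D.flat f (D.flat x f ≫ g) ≫ D.flat x (D.box x f g) ≫ k)) :=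
  D.sum_assoc f (D.flat x f ≫ g) _

lemma flat_comp_flat_box_comp (k : pullback (D.sum x (D.box x f g)) D.p ⟶ D.A) :
    D.flat f (D.flat x f ≫ g) ≫ D.flat x (D.box x f g) ≫ k =
      pullback.map (D.flat x f ≫ g) D.p g D.p (D.flat x f) (𝟙 D.F) (𝟙 D.A) (by simp) (by simp) ≫
        D.flat (D.sum x f) g ≫ eqToHom (by rw [D.sum_assoc]; rfl) ≫ k :=
  -- `rw`/`simp` with `flat_assoc` fail here: `k`'s type mentions `box`, which only unfolds up to defeq.
  calc _ = (D.flat f (D.flat x f ≫ g) ≫ D.flat x (D.box x f g)) ≫ k := (Category.assoc _ _ _).symm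
    _ = _ := congrArg (· ≫ k) (D.flat_assoc x f g)
    _ = _ := (Category.assoc _ _ _).trans (congrArg _ (Category.assoc _ _ _))

end DependentAdder

/-- Associativity of the `⊠` composition: `f ⊠ (g ⊠ h) = (f ⊠ g) ⊠ h`, where `h`, a family
over `Σ^x (f ⊠ g)`, is regarded as a family over `Σ^{Σ^x f} g` via the canonical
identification given by the Sum Associativity Axiom. -/
theorem DependentAdder.box_assoc (D : DependentAdder 𝒞) {U : 𝒞} (x : U ⟶ D.A)
    (f : pullback x D.p ⟶ D.A) (g : pullback (D.sum x f) D.p ⟶ D.A)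
    (h : pullback (D.sum x (D.box x f g)) D.p ⟶ D.A) :
    D.box x f (D.box (D.sum x f) g
      (eqToHom (by rw [D.sum_assoc]; rfl) ≫ h)) =
      D.box x (D.box x f g) h := by
  rw [D.box_box_eq_sum_sum_map, D.box_box_eq_sum_sum_flat_flat, D.flat_comp_flat_box_comp]
end

section
/- Let A be a dependent adder in a category 𝒞 with finite limits. Then for every object U of 𝒞, the set Hom_𝒞(U, A) is a monoid under the multiplication x · y := Σ^y (x ∘ p_y) with unit the constant morphism const_{1_A} : U → A; that is, this multiplication is associative and const_{1_A} is a two-sided unit. -/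
open CategoryTheory CategoryTheory.Limits

universe v u

variable {𝒞 : Type u} [Category.{v} 𝒞] [HasFiniteLimits 𝒞]

variable {𝒞 : Type u} [Category.{v} 𝒞] [HasFiniteLimits 𝒞]

/-!
Naturality of `Σ` makes `x · y = Σ^y (x ∘ p_y)` compatible with precomposition. Then
`(x · y) · z` and `x · (y · z)` both become `Σ^z ((x ∘ p_z) · (y ∘ p_z))`, the second by Sum
Associativity, since the flattening map lies over `U`. `1 · x = x` is the Right Unit Axiom.
For `x · 1 = x` precompose with `p_1 : ⟦1⟧ ⟶ U`, which is split epi because `1` factors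
through `p`; there the identity becomes an instance of the Left Unit Axiom.
-/

namespace DependentAdder

variable (D : DependentAdder 𝒞)

noncomputable def one (U : 𝒞) : U ⟶ D.A := terminal.from U ≫ D.unit ≫ D.p

noncomputable def mul {U : 𝒞} (x y : U ⟶ D.A) : U ⟶ D.A := D.sum y (pullback.fst y D.p ≫ x)

lemma eqToHom_pullback_fst {U : 𝒞} {x y : U ⟶ D.A} (e : x = y)
    (he : pullback x D.p = pullback y D.p) :
    eqToHom he ≫ pullback.fst y D.p = pullback.fst x D.p := by
  subst e
  simp

lemma sum_one {U : 𝒞} (x : U ⟶ D.A) : D.sum x (D.one _) = x :=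
  D.right_unit x

lemma sum_one_flat {U : 𝒞} (x : U ⟶ D.A) (f : pullback x D.p ⟶ D.A) :
    D.sum (D.one _) (D.flat x (D.one _) ≫ eqToHom (by rw [sum_one]) ≫ f) = f :=
  D.left_unit x f

lemma comp_one {U V : 𝒞} (h : V ⟶ U) : h ≫ D.one U = D.one V := by
  simp only [one, ← Category.assoc, terminal.comp_from]

lemma comp_mul {U V : 𝒞} (h : V ⟶ U) (x y : U ⟶ D.A) :
    h ≫ D.mul x y = D.mul (h ≫ x) (h ≫ y) := by
  rw [mul, D.sum_natural, mul, pullback.lift_fst_assoc, Category.assoc]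

lemma mul_sum {U : 𝒞} (w x : U ⟶ D.A) (f : pullback x D.p ⟶ D.A) :
    D.mul w (D.sum x f) = D.sum x (D.mul (pullback.fst x D.p ≫ w) f) := by
  rw [mul, D.sum_assoc, mul, ← Category.assoc, D.flat_over, Category.assoc]

lemma one_mul {U : 𝒞} (x : U ⟶ D.A) : D.mul (D.one U) x = x := by
  rw [mul, comp_one, sum_one]

lemma mul_assoc {U : 𝒞} (x y z : U ⟶ D.A) :
    D.mul (D.mul x y) z = D.mul x (D.mul y z) := by
  rw [mul.eq_1 D y z, mul_sum, ← comp_mul]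
  rfl

lemma fst_comp_mul_one {U : 𝒞} (x w : U ⟶ D.A) :
    D.mul (pullback.fst x D.p ≫ w) (D.one _) = pullback.fst x D.p ≫ w := by
  have hfst : D.flat x (D.one _) ≫ eqToHom (by rw [sum_one]) ≫ pullback.fst x D.p =
      pullback.fst (D.one _) D.p ≫ pullback.fst x D.p := by
    rw [eqToHom_pullback_fst D (D.sum_one x), D.flat_over]
  have h := D.sum_one_flat x (pullback.fst x D.p ≫ w)
  rwa [reassoc_of% hfst] at h

instance isSplitEpi_fst_one (U : 𝒞) : IsSplitEpi (pullback.fst (D.one U) D.p) :=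
  IsSplitEpi.mk' ⟨pullback.lift (𝟙 U) (terminal.from U ≫ D.unit) (by simp [one]),
    pullback.lift_fst _ _ _⟩

lemma mul_one {U : 𝒞} (x : U ⟶ D.A) : D.mul x (D.one U) = x := by
  rw [← cancel_epi (pullback.fst (D.one U) D.p), comp_mul, comp_one, fst_comp_mul_one]

end DependentAdder

/-- For every dependent adder `A` in `𝒞` and every object `U`, the hom-set `Hom(U, A)` is a
monoid under `x · y := Σ^y (x ∘ p_y)` with unit the constant morphism `const_{1_A}`. -/
theorem DependentAdder.hom_monoid (D : DependentAdder 𝒞) (U : 𝒞) :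
    let one : U ⟶ D.A := terminal.from U ≫ D.unit ≫ D.p
    let mul : (U ⟶ D.A) → (U ⟶ D.A) → (U ⟶ D.A) :=
      fun x y => D.sum y (pullback.fst y D.p ≫ x)
    (∀ x y z : U ⟶ D.A, mul (mul x y) z = mul x (mul y z)) ∧
      (∀ x : U ⟶ D.A, mul one x = x) ∧ (∀ x : U ⟶ D.A, mul x one = x) :=
  ⟨D.mul_assoc, D.one_mul, D.mul_one⟩
end
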